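/- Under the hypotheses of the cell stress tensor formula — a finite family of triangular faces with vertex list r : ι → ℝ³, all face area vectors S_F nonzero, enclosed volume V ≠ 0, total area A, energy E(r) = k_V (V − V₀)² + k_A (A − A₀)², forces F_a = −∇_{r_a} E, and σ = (1/V) Σ_a r_a ⊗ F_a — the 3×3 matrix σ is symmetric: σᵀ = σ. -/

import Mathlib

open Matrix BigOperators

/-- Euclidean norm on `ℝ³` realized as `Fin 3 → ℝ`. -/
noncomputable def norm3 (v : Fin 3 → ℝ) : ℝ := Real.sqrt (v ⬝ᵥ v)

/-- The area vector of a triangular face `T = (T₀, T₁, T₂)` with vertex list `r`. -/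
noncomputable def faceAreaVec {ι : Type*} (r : ι → Fin 3 → ℝ) (T : ι × ι × ι) : Fin 3 → ℝ :=
  (1 / 2 : ℝ) • ((r T.2.1 - r T.1) ⨯₃ (r T.2.2 - r T.1))

/-- The total surface area `A = ∑_F ‖S_F‖` of a family of triangular faces. -/
noncomputable def polyArea {K ι : Type*} [Fintype K] (F : K → ι × ι × ι)
    (r : ι → Fin 3 → ℝ) : ℝ :=
  ∑ k : K, norm3 (faceAreaVec r (F k))

/-- The enclosed signed volume `V = (1/6) ∑_F r_{F₀} · (r_{F₁} ×₃ r_{F₂})`. -/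
noncomputable def polyVol {K ι : Type*} [Fintype K] (F : K → ι × ι × ι)
    (r : ι → Fin 3 → ℝ) : ℝ :=
  (1 / 6 : ℝ) * ∑ k : K, r (F k).1 ⬝ᵥ ((r (F k).2.1) ⨯₃ (r (F k).2.2))

/-- The gradient of a scalar function of a single point of `ℝ³`. -/
noncomputable def grad3 (f : (Fin 3 → ℝ) → ℝ) (x : Fin 3 → ℝ) : Fin 3 → ℝ :=
  fun i => fderiv ℝ f x (Pi.single i 1)

/-- The gradient of a scalar function of a family of points with respect to the vertex `a`. -/
noncomputable def vgrad {ι : Type*} [DecidableEq ι] (f : (ι → Fin 3 → ℝ) → ℝ)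
    (r : ι → Fin 3 → ℝ) (a : ι) : Fin 3 → ℝ :=
  grad3 (fun x => f (Function.update r a x)) (r a)

/-- The vertex-model energy `E(r) = k_V (V - V₀)² + k_A (A - A₀)²`. -/
noncomputable def cellEnergy {K ι : Type*} [Fintype K] (F : K → ι × ι × ι)
    (kV kA V₀ A₀ : ℝ) (r : ι → Fin 3 → ℝ) : ℝ :=
  kV * (polyVol F r - V₀) ^ 2 + kA * (polyArea F r - A₀) ^ 2

/-- The cell Cauchy stress tensor `σ = (1/V) ∑_a r_a ⊗ F_a` with forces `F_a = -∇_{r_a} E`. -/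
noncomputable def cellStress {K ι : Type*} [Fintype K] [Fintype ι] [DecidableEq ι]
    (F : K → ι × ι × ι) (kV kA V₀ A₀ : ℝ) (r : ι → Fin 3 → ℝ) :
    Matrix (Fin 3) (Fin 3) ℝ :=
  (polyVol F r)⁻¹ •
    ∑ a : ι, vecMulVec (r a) (-(vgrad (cellEnergy F kV kA V₀ A₀) r a))

/-! ### Auxiliary machinery -/

section Aux

/-- The cross product as a continuous bilinear map. -/
noncomputable def cross2 : (Fin 3 → ℝ) →L[ℝ] (Fin 3 → ℝ) →L[ℝ] (Fin 3 → ℝ) :=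
  LinearMap.toContinuousLinearMap
    (LinearMap.toContinuousLinearMap.toLinearMap.comp crossProduct)

@[simp] lemma cross2_apply (x y : Fin 3 → ℝ) : cross2 x y = x ⨯₃ y := rfl

/-- The dot product as a continuous bilinear map. -/
noncomputable def dot2 : (Fin 3 → ℝ) →L[ℝ] (Fin 3 → ℝ) →L[ℝ] ℝ :=
  LinearMap.toContinuousLinearMap
    (LinearMap.toContinuousLinearMap.toLinearMap.comp
      (LinearMap.mk₂ ℝ dotProduct add_dotProduct smul_dotProduct
        dotProduct_add dotProduct_smul))

@[simp] lemma dot2_apply (x y : Fin 3 → ℝ) : dot2 x y = x ⬝ᵥ y := rfl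

variable {ι : Type*} [Fintype ι] [DecidableEq ι]

/-- Projection to a vertex, as a continuous linear map. -/
noncomputable def vproj (a : ι) : (ι → Fin 3 → ℝ) →L[ℝ] (Fin 3 → ℝ) :=
  ContinuousLinearMap.proj a

@[simp] lemma vproj_apply (a : ι) (r : ι → Fin 3 → ℝ) : vproj a r = r a := rfl

/-- Derivative of the triple product term of the volume. -/
noncomputable def volTermD (p q s : ι) (r : ι → Fin 3 → ℝ) : (ι → Fin 3 → ℝ) →L[ℝ] ℝ :=
  (dot2 (r p)).comp ((cross2 (r q)).comp (vproj s) + (cross2.comp (vproj q)).flip (r s)) +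
    (dot2.comp (vproj p)).flip (r q ⨯₃ r s)

lemma volTermD_apply (p q s : ι) (r v : ι → Fin 3 → ℝ) :
    volTermD p q s r v =
      v p ⬝ᵥ (r q ⨯₃ r s) + r p ⬝ᵥ (v q ⨯₃ r s) + r p ⬝ᵥ (r q ⨯₃ v s) := by
  simp [volTermD, dotProduct_add]
  ring

lemma hasFDerivAt_volTerm (p q s : ι) (r : ι → Fin 3 → ℝ) :
    HasFDerivAt (fun r : ι → Fin 3 → ℝ => r p ⬝ᵥ (r q ⨯₃ r s)) (volTermD p q s r) r := by
  have h1 : HasFDerivAt (fun r : ι → Fin 3 → ℝ => cross2 (r q) (r s))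
      ((cross2 (r q)).comp (vproj s) + (cross2.comp (vproj q)).flip (r s)) r :=
    HasFDerivAt.clm_apply (cross2.comp (vproj q)).hasFDerivAt (vproj s).hasFDerivAt
  have h2 := HasFDerivAt.clm_apply (c := fun r : ι → Fin 3 → ℝ => dot2 (r p))
    (dot2.comp (vproj p)).hasFDerivAt h1
  simpa [volTermD] using h2

/-- Derivative of the (unnormalized) face area vector. -/
noncomputable def areaVecD (p q s : ι) (r : ι → Fin 3 → ℝ) :
    (ι → Fin 3 → ℝ) →L[ℝ] (Fin 3 → ℝ) :=
  (1 / 2 : ℝ) • ((cross2 (r q - r p)).comp (vproj s - vproj p) +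
    (cross2.comp (vproj q - vproj p)).flip (r s - r p))

lemma areaVecD_apply (p q s : ι) (r v : ι → Fin 3 → ℝ) :
    areaVecD p q s r v =
      (1 / 2 : ℝ) • ((v q - v p) ⨯₃ (r s - r p) + (r q - r p) ⨯₃ (v s - v p)) := by
  simp [areaVecD]
  abel

lemma hasFDerivAt_areaVec (p q s : ι) (r : ι → Fin 3 → ℝ) :
    HasFDerivAt (fun r : ι → Fin 3 → ℝ => (1 / 2 : ℝ) • ((r q - r p) ⨯₃ (r s - r p)))
      (areaVecD p q s r) r := by
  have h1 : HasFDerivAt (fun r : ι → Fin 3 → ℝ => cross2 (r q - r p) (r s - r p))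
      ((cross2 (r q - r p)).comp (vproj s - vproj p) +
        (cross2.comp (vproj q - vproj p)).flip (r s - r p)) r := by
    have hc : HasFDerivAt (fun r : ι → Fin 3 → ℝ => cross2 (r q - r p))
        (cross2.comp (vproj q - vproj p)) r := (cross2.comp (vproj q - vproj p)).hasFDerivAt
    have hu : HasFDerivAt (fun r : ι → Fin 3 → ℝ => r s - r p) (vproj s - vproj p) r :=
      (vproj s - vproj p).hasFDerivAt
    exact hc.clm_apply hu
  simpa [areaVecD] using h1.const_smul (1 / 2 : ℝ)

/-- The rotation generator applied to a vector. -/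
def rotv (i j : Fin 3) (x : Fin 3 → ℝ) : Fin 3 → ℝ :=
  x i • (Pi.single j 1 : Fin 3 → ℝ) - x j • (Pi.single i 1 : Fin 3 → ℝ)

lemma rotv_sub (i j : Fin 3) (x y : Fin 3 → ℝ) :
    rotv i j x - rotv i j y = rotv i j (x - y) := by
  funext m
  simp [rotv]
  ring

lemma triple_rot (i j : Fin 3) (p q s : Fin 3 → ℝ) :
    rotv i j p ⬝ᵥ (q ⨯₃ s) + p ⬝ᵥ (rotv i j q ⨯₃ s) + p ⬝ᵥ (q ⨯₃ rotv i j s) = 0 := by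
  fin_cases i <;> fin_cases j <;>
    simp [rotv, crossProduct, dotProduct, Fin.sum_univ_three, Pi.single_apply] <;>
    ring

lemma cross_rot (i j : Fin 3) (u w : Fin 3 → ℝ) :
    (u ⨯₃ w) ⬝ᵥ (rotv i j u ⨯₃ w + u ⨯₃ rotv i j w) = 0 := by
  fin_cases i <;> fin_cases j <;>
    simp [rotv, crossProduct, dotProduct, Fin.sum_univ_three, Pi.single_apply] <;>
    ring

lemma vgrad_eq {f : (ι → Fin 3 → ℝ) → ℝ} {r : ι → Fin 3 → ℝ} (hf : DifferentiableAt ℝ f r)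
    (a : ι) : vgrad f r a = fun i => fderiv ℝ f r (Pi.single a (Pi.single i 1)) := by
  have hg : HasFDerivAt (fun x : Fin 3 → ℝ => Function.update r a x)
      (LinearMap.toContinuousLinearMap (LinearMap.single ℝ (fun _ : ι => Fin 3 → ℝ) a)) (r a) := by
    have : (fun x : Fin 3 → ℝ => Function.update r a x) =
        fun x => r + Pi.single a (x - r a) := by
      funext x
      ext b m
      by_cases hb : b = a
      · subst hb; simp
      · simp [Function.update_of_ne hb, Pi.single_eq_of_ne hb]
    rw [this]
    have h0 : HasFDerivAt (fun x : Fin 3 → ℝ => Pi.single a (x - r a) : (Fin 3 → ℝ) → (ι → Fin 3 → ℝ))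
        (LinearMap.toContinuousLinearMap (LinearMap.single ℝ (fun _ : ι => Fin 3 → ℝ) a)) (r a) := by
      have h1 : HasFDerivAt (fun x : Fin 3 → ℝ => x - r a) (ContinuousLinearMap.id ℝ _) (r a) :=
        (hasFDerivAt_id (r a)).sub_const (r a)
      have h2 := (LinearMap.toContinuousLinearMap
        (LinearMap.single ℝ (fun _ : ι => Fin 3 → ℝ) a)).hasFDerivAt.comp (r a) h1
      simpa [Function.comp_def] using h2
    simpa using h0.const_add r
  have hupd : Function.update r a (r a) = r := Function.update_eq_self a r
  have hcomp := (hupd ▸ hf).hasFDerivAt.comp (r a) hg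
  rw [hupd] at hcomp
  funext i
  show fderiv ℝ (fun x => f (Function.update r a x)) (r a) (Pi.single i 1) = _
  have hfun : (fun x => f (Function.update r a x)) = f ∘ (fun x => Function.update r a x) := rfl
  rw [hfun, hcomp.fderiv]
  simp

end Aux

/-- The cell Cauchy stress tensor is symmetric: `σᵀ = σ`. -/
theorem stmt12 {K ι : Type*} [Fintype K] [Fintype ι] [DecidableEq ι]
    (F : K → ι × ι × ι) (r : ι → Fin 3 → ℝ)
    (hS : ∀ k : K, faceAreaVec r (F k) ≠ 0) (hV : polyVol F r ≠ 0)
    (kV kA V₀ A₀ : ℝ) :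
    (cellStress F kV kA V₀ A₀ r)ᵀ = cellStress F kV kA V₀ A₀ r := by
  classical
  -- derivative of the volume
  set DV : (ι → Fin 3 → ℝ) →L[ℝ] ℝ :=
    (1 / 6 : ℝ) • ∑ k : K, volTermD (F k).1 (F k).2.1 (F k).2.2 r with hDVdef
  have hVolD : HasFDerivAt (polyVol F) DV r := by
    have h : HasFDerivAt (fun r : ι → Fin 3 → ℝ =>
        ∑ k : K, r (F k).1 ⬝ᵥ ((r (F k).2.1) ⨯₃ (r (F k).2.2)))
        (∑ k : K, volTermD (F k).1 (F k).2.1 (F k).2.2 r) r :=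
      HasFDerivAt.fun_sum fun k _ => hasFDerivAt_volTerm _ _ _ r
    have h6 := h.const_mul (1 / 6 : ℝ)
    exact h6
  -- derivative of the area
  set DA : (ι → Fin 3 → ℝ) →L[ℝ] ℝ :=
    ∑ k : K, (1 / (2 * Real.sqrt (faceAreaVec r (F k) ⬝ᵥ faceAreaVec r (F k)))) •
      ((dot2 (faceAreaVec r (F k))).comp (areaVecD (F k).1 (F k).2.1 (F k).2.2 r) +
        ((dot2.comp (areaVecD (F k).1 (F k).2.1 (F k).2.2 r)).flip (faceAreaVec r (F k))))
      with hDAdef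
  have hSne : ∀ k : K, faceAreaVec r (F k) ⬝ᵥ faceAreaVec r (F k) ≠ 0 := by
    intro k
    have := hS k
    intro h
    apply this
    funext m
    have hnn : ∀ v : Fin 3 → ℝ, v ⬝ᵥ v = ∑ m, v m ^ 2 := by
      intro v; simp [dotProduct, pow_two]
    rw [hnn] at h
    have := (Finset.sum_eq_zero_iff_of_nonneg (fun m _ => sq_nonneg _)).mp h m (Finset.mem_univ m)
    simpa [pow_eq_zero_iff] using this
  have hAreaD : HasFDerivAt (polyArea F) DA r := by
    apply HasFDerivAt.fun_sum
    intro k _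
    have hSv := hasFDerivAt_areaVec (F k).1 (F k).2.1 (F k).2.2 r
    have hSv' : HasFDerivAt (fun r : ι → Fin 3 → ℝ => faceAreaVec r (F k))
        (areaVecD (F k).1 (F k).2.1 (F k).2.2 r) r := hSv
    have hdotc : HasFDerivAt (fun r : ι → Fin 3 → ℝ => dot2 (faceAreaVec r (F k)))
        (dot2.comp (areaVecD (F k).1 (F k).2.1 (F k).2.2 r)) r :=
      (dot2.hasFDerivAt).comp r hSv'
    have hsq : HasFDerivAt (fun r : ι → Fin 3 → ℝ => faceAreaVec r (F k) ⬝ᵥ faceAreaVec r (F k))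
        ((dot2 (faceAreaVec r (F k))).comp (areaVecD (F k).1 (F k).2.1 (F k).2.2 r) +
          ((dot2.comp (areaVecD (F k).1 (F k).2.1 (F k).2.2 r)).flip (faceAreaVec r (F k)))) r := by
      have := hdotc.clm_apply hSv'
      simpa using this
    have := hsq.sqrt (hSne k)
    simpa [norm3] using this
  -- derivative of the energy
  set cV : ℝ := kV * (2 * (polyVol F r - V₀)) with hcV
  set cA : ℝ := kA * (2 * (polyArea F r - A₀)) with hcA
  set DE : (ι → Fin 3 → ℝ) →L[ℝ] ℝ := cV • DV + cA • DA with hDEdef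
  have hED : HasFDerivAt (cellEnergy F kV kA V₀ A₀) DE r := by
    have h1 : HasFDerivAt (fun r : ι → Fin 3 → ℝ => (polyVol F r - V₀) ^ 2)
        ((2 * (polyVol F r - V₀)) • DV) r := by
      have := ((hVolD.sub_const V₀).fun_mul (hVolD.sub_const V₀))
      have h2 : (fun r : ι → Fin 3 → ℝ => (polyVol F r - V₀) ^ 2) =
          fun r => (polyVol F r - V₀) * (polyVol F r - V₀) := by
        funext r; ring
      rw [h2]
      refine this.congr_fderiv ?_
      module
    have h2 : HasFDerivAt (fun r : ι → Fin 3 → ℝ => (polyArea F r - A₀) ^ 2)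
        ((2 * (polyArea F r - A₀)) • DA) r := by
      have := ((hAreaD.sub_const A₀).fun_mul (hAreaD.sub_const A₀))
      have h2 : (fun r : ι → Fin 3 → ℝ => (polyArea F r - A₀) ^ 2) =
          fun r => (polyArea F r - A₀) * (polyArea F r - A₀) := by
        funext r; ring
      rw [h2]
      refine this.congr_fderiv ?_
      module
    have := (h1.const_mul kV).fun_add (h2.const_mul kA)
    have heq : (fun r : ι → Fin 3 → ℝ =>
        kV * (polyVol F r - V₀) ^ 2 + kA * (polyArea F r - A₀) ^ 2) =
        cellEnergy F kV kA V₀ A₀ := rfl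
    rw [heq] at this
    refine this.congr_fderiv ?_
    rw [hDEdef, hcV, hcA]
    module
  -- the key vanishing identities
  have hVrot : ∀ i j : Fin 3, DV (fun a => rotv i j (r a)) = 0 := by
    intro i j
    rw [hDVdef]
    simp only [ContinuousLinearMap.smul_apply, ContinuousLinearMap.sum_apply, smul_eq_mul]
    rw [Finset.sum_congr rfl fun k _ => volTermD_apply _ _ _ _ _]
    have : ∀ k : K, rotv i j (r (F k).1) ⬝ᵥ (r (F k).2.1 ⨯₃ r (F k).2.2) +
        r (F k).1 ⬝ᵥ (rotv i j (r (F k).2.1) ⨯₃ r (F k).2.2) +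
        r (F k).1 ⬝ᵥ (r (F k).2.1 ⨯₃ rotv i j (r (F k).2.2)) = 0 :=
      fun k => triple_rot i j _ _ _
    rw [Finset.sum_congr rfl fun k _ => this k]
    simp
  have hArot : ∀ i j : Fin 3, DA (fun a => rotv i j (r a)) = 0 := by
    intro i j
    rw [hDAdef]
    simp only [ContinuousLinearMap.sum_apply, ContinuousLinearMap.smul_apply,
      ContinuousLinearMap.add_apply, ContinuousLinearMap.comp_apply,
      ContinuousLinearMap.flip_apply, smul_eq_mul]
    apply Finset.sum_eq_zero
    intro k _
    have harea : areaVecD (F k).1 (F k).2.1 (F k).2.2 r (fun a => rotv i j (r a)) =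
        (1 / 2 : ℝ) • (rotv i j (r (F k).2.1 - r (F k).1) ⨯₃ (r (F k).2.2 - r (F k).1) +
          (r (F k).2.1 - r (F k).1) ⨯₃ rotv i j (r (F k).2.2 - r (F k).1)) := by
      rw [areaVecD_apply]
      rw [rotv_sub, rotv_sub]
    have hz : faceAreaVec r (F k) ⬝ᵥ
        areaVecD (F k).1 (F k).2.1 (F k).2.2 r (fun a => rotv i j (r a)) = 0 := by
      rw [harea, faceAreaVec]
      rw [smul_dotProduct, dotProduct_smul]
      rw [cross_rot i j (r (F k).2.1 - r (F k).1) (r (F k).2.2 - r (F k).1)]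
      simp
    have hz' : areaVecD (F k).1 (F k).2.1 (F k).2.2 r (fun a => rotv i j (r a)) ⬝ᵥ
        faceAreaVec r (F k) = 0 := by
      rw [dotProduct_comm]; exact hz
    simp [dot2_apply, hz, hz']
  have hErot : ∀ i j : Fin 3, DE (fun a => rotv i j (r a)) = 0 := by
    intro i j
    rw [hDEdef]
    simp [hVrot i j, hArot i j]
  -- gradient of the energy via the global derivative
  have hgrad : ∀ a : ι, vgrad (cellEnergy F kV kA V₀ A₀) r a =
      fun i => DE (Pi.single a (Pi.single i 1)) := by
    intro a
    rw [vgrad_eq hED.differentiableAt a]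
    simp [hED.fderiv]
  -- the antisymmetric part of the stress vanishes
  have key : ∀ i j : Fin 3,
      ∑ a : ι, r a i * vgrad (cellEnergy F kV kA V₀ A₀) r a j =
      ∑ a : ι, r a j * vgrad (cellEnergy F kV kA V₀ A₀) r a i := by
    intro i j
    have hsum : ∑ a : ι, (r a i * vgrad (cellEnergy F kV kA V₀ A₀) r a j -
        r a j * vgrad (cellEnergy F kV kA V₀ A₀) r a i) = 0 := by
      have hterm : ∀ a : ι, r a i * vgrad (cellEnergy F kV kA V₀ A₀) r a j -
          r a j * vgrad (cellEnergy F kV kA V₀ A₀) r a i =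
          DE (Pi.single a (rotv i j (r a))) := by
        intro a
        rw [hgrad a]
        have : Pi.single a (rotv i j (r a)) =
            r a i • (Pi.single a (Pi.single j 1 : Fin 3 → ℝ) : ι → Fin 3 → ℝ) -
              r a j • (Pi.single a (Pi.single i 1 : Fin 3 → ℝ) : ι → Fin 3 → ℝ) := by
          rw [rotv, Pi.single_sub, Pi.single_smul, Pi.single_smul]
        rw [this]
        simp [smul_eq_mul]
      rw [Finset.sum_congr rfl fun a _ => hterm a]
      rw [← map_sum]
      have : ∑ a : ι, Pi.single a (rotv i j (r a)) = fun a => rotv i j (r a) :=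
        Finset.univ_sum_single _
      rw [this, hErot i j]
    have := Finset.sum_sub_distrib (s := Finset.univ)
      (f := fun a => r a i * vgrad (cellEnergy F kV kA V₀ A₀) r a j)
      (g := fun a => r a j * vgrad (cellEnergy F kV kA V₀ A₀) r a i) ▸ hsum
    linarith [this]
  -- conclude
  ext i j
  simp only [cellStress, Matrix.transpose_apply, Matrix.smul_apply, Finset.sum_apply,
    Matrix.sum_apply, Matrix.vecMulVec_apply, Pi.neg_apply, smul_eq_mul]
  congr 1
  have h1 : ∑ a : ι, r a j * -vgrad (cellEnergy F kV kA V₀ A₀) r a i =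
      -∑ a : ι, r a j * vgrad (cellEnergy F kV kA V₀ A₀) r a i := by
    rw [← Finset.sum_neg_distrib]; congr 1; funext a; ring
  have h2 : ∑ a : ι, r a i * -vgrad (cellEnergy F kV kA V₀ A₀) r a j =
      -∑ a : ι, r a i * vgrad (cellEnergy F kV kA V₀ A₀) r a j := by
    rw [← Finset.sum_neg_distrib]; congr 1; funext a; ring
  rw [h1, h2, key i j]
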